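/- Let H be a marked, primitive and aperiodic substitution over a finite alphabet A, and let K be the closure of the σ-orbit of a fixed point of H. If x ∈ A^ℕ \ K, then H^s(x) ∉ K for every integer s ≥ 0; equivalently, δ(H^s(x)) is finite for every s. -/

import Mathlib

open Filter Topology MeasureTheory

variable {A : Type*}

/-- The shift map on infinite words. -/
def shift (x : ℕ → A) : ℕ → A := fun n => x (n + 1)

/-- Image of a finite word under a substitution. -/
def wordMap (H : A → List A) (w : List A) : List A := w.flatMap H

/-- Image of an infinite word under a substitution (each `H a` nonempty makes this the
infinite concatenation `H(x₀)H(x₁)⋯`). -/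
def substSeq (H : A → List A) (x : ℕ → A) : ℕ → A :=
  fun n => (wordMap H ((List.range (n + 1)).map x)).getD n (x 0)

/-- The prefix of length `n` of an infinite word. -/
def prefixWord (x : ℕ → A) (n : ℕ) : List A := (List.range n).map x

/-- The factor of length `n` at position `i` of an infinite word. -/
def factorAt (x : ℕ → A) (i n : ℕ) : List A := (List.range n).map fun j => x (i + j)

/-- The language of an infinite word: the set of its finite factors. -/
def Lang (u : ℕ → A) : Set (List A) := {w | ∃ i, w = factorAt u i w.length}

/-- A sequence is (purely) periodic for the shift. -/
def PeriodicSeq (x : ℕ → A) : Prop := ∃ m, 0 < m ∧ ∀ n, x (n + m) = x n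

/-- `u` is a fixed point of the substitution `H`. -/
def IsFixedPointSubst (H : A → List A) (u : ℕ → A) : Prop := substSeq H u = u

/-- `H` is primitive: some power of `H` maps every letter onto a word containing
every letter. -/
def PrimitiveSubst (H : A → List A) : Prop :=
  ∃ k, 0 < k ∧ ∀ a b : A, b ∈ (wordMap H)^[k] [a]

/-- `H` is aperiodic: no fixed point of `H` is periodic for the shift. -/
def AperiodicSubst (H : A → List A) : Prop :=
  ∀ u : ℕ → A, IsFixedPointSubst H u → ¬ PeriodicSeq u

/-- `H` is marked: first letters of images are pairwise distinct, and so are last letters. -/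
def MarkedSubst (H : A → List A) (hne : ∀ a, H a ≠ []) : Prop :=
  Function.Injective (fun a => (H a).head (hne a)) ∧
  Function.Injective (fun a => (H a).getLast (hne a))

/-- `H` is 2-full (with respect to the fixed point `u`): every word of length 2 belongs
to the language. -/
def TwoFull (H : A → List A) (u : ℕ → A) : Prop :=
  ∀ w : List A, w.length = 2 → w ∈ Lang u

/-- The attractor `K`: closure of the shift-orbit of the fixed point `u`. -/
def orbitClosure [TopologicalSpace A] (u : ℕ → A) : Set (ℕ → A) :=
  closure {y | ∃ n, y = shift^[n] u}

/-- `δ(x)`: the length of the maximal prefix of `x` belonging to the language of `u`. -/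
noncomputable def delta (u x : ℕ → A) : ℕ := sSup {n | prefixWord x n ∈ Lang u}

/-- The renormalization operator `R`. -/
noncomputable def renorm (H : A → List A) (V : (ℕ → A) → ℝ) : (ℕ → A) → ℝ :=
  fun x => ∑ i ∈ Finset.range (H (x 0)).length, V (shift^[i] (substSeq H x))

/-- `t_n(x) = |H^n(x₀)|`. -/
def tlen (H : A → List A) (n : ℕ) (x : ℕ → A) : ℕ := ((wordMap H)^[n] [x 0]).length

/-- An accident occurs at time `b`. -/
def AccidentAt (u x : ℕ → A) (b : ℕ) : Prop :=
  0 < b ∧ delta u x - b < delta u (shift^[b] x) ∧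
    ∀ i < b, delta u (shift^[i] x) = delta u x - i

/-- The first accident time of `x` (junk value `0` if there is none). -/
noncomputable def firstAccident (u x : ℕ → A) : ℕ := sInf {b | AccidentAt u x b}

/-- The `j`-th accident time `B_j` of `x`, defined inductively. -/
noncomputable def accidentTime (u x : ℕ → A) : ℕ → ℕ
  | 0 => 0
  | j + 1 => accidentTime u x j + firstAccident u (shift^[accidentTime u x j] x)

/-- The set of (genuine) accident times of `x`. -/
def AccidentSet (u x : ℕ → A) : Set ℕ :=
  {B | ∃ j : ℕ, B = accidentTime u x (j + 1) ∧
        AccidentAt u (shift^[accidentTime u x j] x)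
          (firstAccident u (shift^[accidentTime u x j] x))}

/-- A word is right special. -/
def RightSpecial (u : ℕ → A) (w : List A) : Prop :=
  ∃ b c : A, b ≠ c ∧ w ++ [b] ∈ Lang u ∧ w ++ [c] ∈ Lang u

/-- A word is left special. -/
def LeftSpecial (u : ℕ → A) (w : List A) : Prop :=
  ∃ a b : A, a ≠ b ∧ a :: w ∈ Lang u ∧ b :: w ∈ Lang u

/-- A word is bispecial. -/
def Bispecial (u : ℕ → A) (w : List A) : Prop := RightSpecial u w ∧ LeftSpecial u w

/-- `l` is a recognizability constant for `H`: every long enough word of the language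
admits a unique desubstitution. -/
def RecogBound (H : A → List A) (u : ℕ → A) (l : ℕ) : Prop :=
  ∀ z ∈ Lang u, l < z.length →
    ∃! d : List A × List A × List A,
      ∃ s p : A,
        z = d.1 ++ wordMap H d.2.1 ++ d.2.2 ∧
        d.2.1 ∈ Lang u ∧
        d.1 <:+ H s ∧ d.1.length < (H s).length ∧
        d.2.2 <+: H p ∧ d.2.2.length < (H p).length ∧
        ([s] ++ d.2.1 ++ [p]) ∈ Lang u

/-- The incidence matrix of a substitution, with real entries. -/
def incMat [Fintype A] [DecidableEq A] (H : A → List A) : Matrix A A ℝ :=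
  fun a b => ((H a).count b : ℝ)

/-- `lam` is the Perron–Frobenius eigenvalue of the incidence matrix of the (primitive)
substitution `H`: it admits an entrywise positive eigenvector. -/
def IsPerronValue [Fintype A] [DecidableEq A] (H : A → List A) (lam : ℝ) : Prop :=
  ∃ v : A → ℝ, (∀ a, 0 < v a) ∧ (incMat H).mulVec v = lam • v

/-- Concatenation of a finite word with an infinite word. -/
def catWord (S : List A) (y : ℕ → A) : ℕ → A :=
  fun n => S.getD n (y (n - S.length))

/-!
It suffices that `H(x) ∈ K` forces `x ∈ K`. If `H(x)` lies in `K`, then, by compactness of `K`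
and `u = H(u)`, `H(x) = σʳ(H(z))` for some `z ∈ K` and some offset `0 ≤ r < |H(z₀)|`.
For `r = 0`, distinct first letters make `H` injective, so `x = z ∈ K`. For `r > 0`, distinct
last letters show that no block boundary of `H(x)` is one of `H(z)`; then distinct first letters
make the pair of positions inside the current blocks of `H(x)` and `H(z)` evolve
deterministically through a finite set of states, so `H(x)` is eventually periodic. Since `u` is
uniformly recurrent, every prefix of `u` occurs in the periodic tail of `H(x) ∈ K`, so `u` would
be periodic, contradicting aperiodicity.
-/

variable {H : A → List A}

lemma shift_iterate_apply (n : ℕ) (y : ℕ → A) (t : ℕ) : shift^[n] y t = y (t + n) := by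
  induction n generalizing y with
  | zero => rfl
  | succ n ih => rw [Function.iterate_succ_apply, ih]; rfl

lemma continuous_shift [TopologicalSpace A] : Continuous (shift : (ℕ → A) → ℕ → A) :=
  continuous_pi fun n => continuous_apply (n + 1)

@[simp] lemma length_prefixWord (x : ℕ → A) (n : ℕ) : (prefixWord x n).length = n := by
  simp [prefixWord]

lemma prefixWord_succ (x : ℕ → A) (n : ℕ) : prefixWord x (n + 1) = prefixWord x n ++ [x n] := by
  simp [prefixWord, List.range_succ]

lemma prefixWord_add (x : ℕ → A) (m n : ℕ) :
    prefixWord x (m + n) = prefixWord x m ++ prefixWord (shift^[m] x) n := by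
  simp only [prefixWord, List.range_add, List.map_append, List.map_map]
  congr 2
  funext j
  simp [shift_iterate_apply, Nat.add_comm]

lemma prefixWord_isPrefix (x : ℕ → A) {m n : ℕ} (h : m ≤ n) :
    prefixWord x m <+: prefixWord x n := by
  obtain ⟨k, rfl⟩ := Nat.exists_eq_add_of_le h
  rw [prefixWord_add]
  exact List.prefix_append _ _

lemma wordMap_append (w v : List A) : wordMap H (w ++ v) = wordMap H w ++ wordMap H v :=
  List.flatMap_append

@[simp] lemma wordMap_singleton (a : A) : wordMap H [a] = H a := by
  simp [wordMap]

lemma mul_length_le_length_wordMap {c : ℕ} (h : ∀ a, c ≤ (H a).length) (w : List A) :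
    c * w.length ≤ (wordMap H w).length := by
  induction w with
  | nil => simp [wordMap]
  | cons a w ih =>
    simp only [wordMap, List.flatMap_cons, List.length_append, List.length_cons] at ih ⊢
    have := h a
    rw [Nat.mul_succ]
    omega

def blockStart (H : A → List A) (x : ℕ → A) (m : ℕ) : ℕ := (wordMap H (prefixWord x m)).length

@[simp] lemma blockStart_zero (x : ℕ → A) : blockStart H x 0 = 0 := by
  simp [blockStart, prefixWord, wordMap]

lemma blockStart_succ (x : ℕ → A) (m : ℕ) :
    blockStart H x (m + 1) = blockStart H x m + (H (x m)).length := by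
  simp [blockStart, prefixWord_succ, wordMap_append]

lemma blockStart_add (x : ℕ → A) (m n : ℕ) :
    blockStart H x (m + n) = blockStart H x m + blockStart H (shift^[m] x) n := by
  simp [blockStart, prefixWord_add, wordMap_append]

lemma strictMono_blockStart (hne : ∀ a, H a ≠ []) (x : ℕ → A) : StrictMono (blockStart H x) :=
  strictMono_nat_of_lt_succ fun m => by
    rw [blockStart_succ]
    exact Nat.lt_add_of_pos_right (List.length_pos_iff.mpr (hne _))

lemma substSeq_eq_getD_of_lt_blockStart (hne : ∀ a, H a ≠ []) (x : ℕ → A) {n m : ℕ}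
    (h : n < blockStart H x m) : substSeq H x n = (wordMap H (prefixWord x m)).getD n (x 0) := by
  have getD_of_isPrefix : ∀ {k l : ℕ}, k ≤ l → n < blockStart H x k →
      (wordMap H (prefixWord x l)).getD n (x 0) = (wordMap H (prefixWord x k)).getD n (x 0) := by
    intro k l hkl hn
    obtain ⟨t, ht⟩ := prefixWord_isPrefix x hkl
    rw [← ht, wordMap_append, List.getD_append _ _ _ _ hn]
  have hn : n < blockStart H x (n + 1) :=
    (Nat.lt_succ_self n).trans_le (strictMono_blockStart hne x).le_apply
  rcases le_total m (n + 1) with hm | hm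
  · exact getD_of_isPrefix hm h
  · exact (getD_of_isPrefix hm hn).symm

lemma substSeq_blockStart_add (hne : ∀ a, H a ≠ []) (x : ℕ → A) {m t : ℕ}
    (ht : t < (H (x m)).length) :
    substSeq H x (blockStart H x m + t) = (H (x m)).getD t (x 0) := by
  rw [substSeq_eq_getD_of_lt_blockStart hne x (m := m + 1) (by rw [blockStart_succ]; omega),
    prefixWord_succ, wordMap_append, wordMap_singleton,
    List.getD_append_right _ _ _ _ (Nat.le_add_right (blockStart H x m) t)]
  simp [blockStart]

lemma substSeq_blockStart (hne : ∀ a, H a ≠ []) (x : ℕ → A) (m : ℕ) :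
    substSeq H x (blockStart H x m) = (H (x m)).head (hne _) := by
  have h0 : 0 < (H (x m)).length := List.length_pos_iff.mpr (hne _)
  rw [← Nat.add_zero (blockStart H x m), substSeq_blockStart_add hne x h0,
    List.getD_eq_getElem _ _ h0, List.head_eq_getElem]

lemma substSeq_blockStart_succ_sub_one (hne : ∀ a, H a ≠ []) (x : ℕ → A) (m : ℕ) :
    substSeq H x (blockStart H x (m + 1) - 1) = (H (x m)).getLast (hne _) := by
  have h0 : 0 < (H (x m)).length := List.length_pos_iff.mpr (hne _)
  rw [blockStart_succ, Nat.add_sub_assoc h0, substSeq_blockStart_add hne x (by omega),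
    List.getD_eq_getElem _ _ (by omega), List.getLast_eq_getElem]

lemma shift_iterate_blockStart_substSeq (hne : ∀ a, H a ≠ []) (x : ℕ → A) (m : ℕ) :
    shift^[blockStart H x m] (substSeq H x) = substSeq H (shift^[m] x) := by
  funext t
  have ht : t < blockStart H (shift^[m] x) (t + 1) :=
    (Nat.lt_succ_self t).trans_le (strictMono_blockStart hne _).le_apply
  rw [shift_iterate_apply, Nat.add_comm,
    substSeq_eq_getD_of_lt_blockStart hne x (m := m + (t + 1)) (by rw [blockStart_add]; omega),
    substSeq_eq_getD_of_lt_blockStart hne _ ht, prefixWord_add, wordMap_append,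
    List.getD_append_right _ _ _ _ (Nat.le_add_right (blockStart H x m) t)]
  simp only [blockStart, Nat.add_sub_cancel_left]
  rw [List.getD_eq_getElem _ _ ht, List.getD_eq_getElem _ _ ht]

lemma substSeq_congr {x x' : ℕ → A} {n : ℕ} (h : ∀ i ≤ n, x i = x' i) :
    substSeq H x n = substSeq H x' n := by
  have hmap : (List.range (n + 1)).map x = (List.range (n + 1)).map x' :=
    List.map_congr_left fun i hi => h i (Nat.lt_succ_iff.mp (List.mem_range.mp hi))
  simp only [substSeq, hmap, h 0 (Nat.zero_le n)]

lemma continuous_substSeq [TopologicalSpace A] [DiscreteTopology A] :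
    Continuous (substSeq H) := by
  refine continuous_pi fun n => IsLocallyConstant.continuous ?_
  refine (IsLocallyConstant.iff_eventually_eq _).mpr fun x => ?_
  filter_upwards [(PiNat.isOpen_cylinder (fun _ => A) x (n + 1)).mem_nhds
    (PiNat.self_mem_cylinder x (n + 1))] with x' hx'
  exact substSeq_congr fun i hi => hx' i (Nat.lt_succ_of_le hi)

def blockIndex (H : A → List A) (x : ℕ → A) (n : ℕ) : ℕ :=
  Nat.findGreatest (fun j => blockStart H x j ≤ n) n

lemma blockStart_blockIndex_le (x : ℕ → A) (n : ℕ) : blockStart H x (blockIndex H x n) ≤ n :=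
  Nat.findGreatest_spec (P := fun j => blockStart H x j ≤ n) (Nat.zero_le n) (by simp)

lemma lt_blockStart_blockIndex_succ (hne : ∀ a, H a ≠ []) (x : ℕ → A) (n : ℕ) :
    n < blockStart H x (blockIndex H x n + 1) := by
  by_contra! h
  exact Nat.findGreatest_is_greatest (Nat.lt_succ_self _)
    ((strictMono_blockStart hne x).le_apply.trans h) h

lemma blockIndex_eq (hne : ∀ a, H a ≠ []) {x : ℕ → A} {n j : ℕ} (h₁ : blockStart H x j ≤ n)
    (h₂ : n < blockStart H x (j + 1)) : blockIndex H x n = j := by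
  have hs := strictMono_blockStart hne x
  have := hs.lt_iff_lt.mp ((blockStart_blockIndex_le x n).trans_lt h₂)
  have := hs.lt_iff_lt.mp (h₁.trans_lt (lt_blockStart_blockIndex_succ hne x n))
  omega

/-- Position `n` of `H(x)` is the `(blockPhase H x n).2`-th letter of the block
`H((blockPhase H x n).1)`. -/
def blockPhase (H : A → List A) (x : ℕ → A) (n : ℕ) : A × ℕ :=
  (x (blockIndex H x n), n - blockStart H x (blockIndex H x n))

lemma blockPhase_snd_lt (hne : ∀ a, H a ≠ []) (x : ℕ → A) (n : ℕ) :
    (blockPhase H x n).2 < (H (blockPhase H x n).1).length := by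
  have h₁ := blockStart_blockIndex_le (H := H) x n
  have h₂ := lt_blockStart_blockIndex_succ hne x n
  rw [blockStart_succ] at h₂
  simp only [blockPhase]
  omega

lemma substSeq_eq_getD_blockPhase (hne : ∀ a, H a ≠ []) (x : ℕ → A) (n : ℕ) :
    substSeq H x n = (H (blockPhase H x n).1).getD (blockPhase H x n).2 (x 0) := by
  conv_lhs => rw [← Nat.add_sub_cancel' (blockStart_blockIndex_le (H := H) x n)]
  exact substSeq_blockStart_add hne x (blockPhase_snd_lt hne x n)

lemma substSeq_eq_of_blockPhase_eq (hne : ∀ a, H a ≠ []) {x : ℕ → A} {n₁ n₂ : ℕ}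
    (h : blockPhase H x n₁ = blockPhase H x n₂) : substSeq H x n₁ = substSeq H x n₂ := by
  rw [substSeq_eq_getD_blockPhase hne, substSeq_eq_getD_blockPhase hne, h]

lemma blockPhase_blockStart (hne : ∀ a, H a ≠ []) (x : ℕ → A) (m : ℕ) :
    blockPhase H x (blockStart H x m) = (x m, 0) := by
  rw [blockPhase, blockIndex_eq hne le_rfl ((strictMono_blockStart hne x) (Nat.lt_succ_self m)),
    Nat.sub_self]

lemma blockPhase_succ_of_lt (hne : ∀ a, H a ≠ []) {x : ℕ → A} {n : ℕ}
    (h : (blockPhase H x n).2 + 1 < (H (blockPhase H x n).1).length) :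
    blockPhase H x (n + 1) = ((blockPhase H x n).1, (blockPhase H x n).2 + 1) := by
  have h₁ := blockStart_blockIndex_le (H := H) x n
  have h' : n - blockStart H x (blockIndex H x n) + 1 < (H (x (blockIndex H x n))).length := h
  have hidx : blockIndex H x (n + 1) = blockIndex H x n := by
    refine blockIndex_eq hne (by omega) ?_
    rw [blockStart_succ]
    omega
  rw [blockPhase, blockPhase, hidx]
  congr 1
  omega

lemma blockStart_blockIndex_succ_of_eq {x : ℕ → A} {n : ℕ}
    (h : (blockPhase H x n).2 + 1 = (H (blockPhase H x n).1).length) :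
    blockStart H x (blockIndex H x n + 1) = n + 1 := by
  have h₁ := blockStart_blockIndex_le (H := H) x n
  have h' : n - blockStart H x (blockIndex H x n) + 1 = (H (x (blockIndex H x n))).length := h
  rw [blockStart_succ]
  omega

lemma blockPhase_succ_eq_of_lt (hne : ∀ a, H a ≠ []) {x : ℕ → A} {n₁ n₂ : ℕ}
    (hph : blockPhase H x n₁ = blockPhase H x n₂)
    (h : (blockPhase H x n₁).2 + 1 < (H (blockPhase H x n₁).1).length) :
    blockPhase H x (n₁ + 1) = blockPhase H x (n₂ + 1) := by
  rw [blockPhase_succ_of_lt hne h, blockPhase_succ_of_lt hne (hph ▸ h), hph]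

/-- At the end of a block, the letter at `n + 1` is the first letter of the next block. -/
lemma blockPhase_succ_eq (hne : ∀ a, H a ≠ [])
    (hhead : Function.Injective fun a => (H a).head (hne a)) {x : ℕ → A} {n₁ n₂ : ℕ}
    (hph : blockPhase H x n₁ = blockPhase H x n₂)
    (hlet : substSeq H x (n₁ + 1) = substSeq H x (n₂ + 1)) :
    blockPhase H x (n₁ + 1) = blockPhase H x (n₂ + 1) := by
  rcases (Nat.succ_le_of_lt (blockPhase_snd_lt hne x n₁)).lt_or_eq with hlt | hend
  · exact blockPhase_succ_eq_of_lt hne hph hlt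
  · have hend₂ := blockStart_blockIndex_succ_of_eq (hph ▸ hend)
    have hend₁ := blockStart_blockIndex_succ_of_eq hend
    rw [← hend₁, ← hend₂, substSeq_blockStart hne x, substSeq_blockStart hne x] at hlet
    rw [← hend₁, ← hend₂, blockPhase_blockStart hne, blockPhase_blockStart hne, hhead hlet]

lemma substSeq_injective (hne : ∀ a, H a ≠ [])
    (hhead : Function.Injective fun a => (H a).head (hne a)) :
    Function.Injective (substSeq H) := by
  intro x z h
  have letter_eq : ∀ m, blockStart H x m = blockStart H z m → x m = z m := fun m hm =>
    hhead (by simp only [← substSeq_blockStart hne, h, hm])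
  have agree : ∀ m, blockStart H x m = blockStart H z m ∧ x m = z m := by
    intro m
    induction m with
    | zero => exact ⟨by simp, letter_eq 0 (by simp)⟩
    | succ m ih =>
      have hm : blockStart H x (m + 1) = blockStart H z (m + 1) := by
        rw [blockStart_succ, blockStart_succ, ih.1, ih.2]
      exact ⟨hm, letter_eq _ hm⟩
  exact funext fun m => (agree m).2

section Misaligned

variable {x z : ℕ → A} {r : ℕ}

/-- Walking back from a common block boundary, distinct last letters force the preceding blocks
to coincide, down to the boundaries `r` and `0`. -/
lemma add_blockStart_ne_blockStart (hne : ∀ a, H a ≠ [])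
    (hlast : Function.Injective fun a => (H a).getLast (hne a)) (hr : 0 < r)
    (hrz : r < (H (z 0)).length) (hxz : ∀ t, substSeq H x t = substSeq H z (r + t)) (m k : ℕ) :
    r + blockStart H x m ≠ blockStart H z k := by
  induction m generalizing k with
  | zero =>
    rcases k with _ | k
    · simpa using hr.ne'
    · have h1 : blockStart H z 1 = (H (z 0)).length := by
        simpa using blockStart_succ (H := H) z 0
      have := (strictMono_blockStart hne z).monotone (Nat.le_add_left 1 k)
      simp only [blockStart_zero]
      omega
  | succ m ih =>
    intro heq
    have hpos := (strictMono_blockStart hne x).le_apply (x := m + 1)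
    rcases k with _ | k
    · simp at heq
      omega
    have hlet : x m = z k := hlast <| by
      simp only [← substSeq_blockStart_succ_sub_one hne, hxz]
      congr 1
      omega
    apply ih k
    rw [blockStart_succ, blockStart_succ, hlet] at heq
    omega

/-- At most one of the two current blocks ends at `n`; the side that continues fixes the next
letter, and that letter fixes the other side. -/
lemma misaligned_blockPhase_succ_eq (hne : ∀ a, H a ≠ []) (hmarked : MarkedSubst H hne)
    (hr : 0 < r) (hrz : r < (H (z 0)).length)
    (hxz : ∀ t, substSeq H x t = substSeq H z (r + t)) {n₁ n₂ : ℕ}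
    (h : (blockPhase H x n₁, blockPhase H z (r + n₁)) =
      (blockPhase H x n₂, blockPhase H z (r + n₂))) :
    (blockPhase H x (n₁ + 1), blockPhase H z (r + (n₁ + 1))) =
      (blockPhase H x (n₂ + 1), blockPhase H z (r + (n₂ + 1))) := by
  obtain ⟨hx, hz⟩ := Prod.ext_iff.mp h
  by_cases hx_end : (blockPhase H x n₁).2 + 1 = (H (blockPhase H x n₁).1).length
  · have hz_lt : (blockPhase H z (r + n₁)).2 + 1 < (H (blockPhase H z (r + n₁)).1).length := by
      refine lt_of_le_of_ne (blockPhase_snd_lt hne z _) fun hz_end => ?_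
      refine add_blockStart_ne_blockStart hne hmarked.2 hr hrz hxz (blockIndex H x n₁ + 1)
        (blockIndex H z (r + n₁) + 1) ?_
      rw [blockStart_blockIndex_succ_of_eq hx_end, blockStart_blockIndex_succ_of_eq hz_end]
      omega
    have hz' := blockPhase_succ_eq_of_lt hne hz hz_lt
    have hx' := blockPhase_succ_eq hne hmarked.1 hx
      (by rw [hxz, hxz]; exact substSeq_eq_of_blockPhase_eq hne hz')
    exact Prod.ext hx' hz'
  · have hx_lt := lt_of_le_of_ne (blockPhase_snd_lt hne x n₁) hx_end
    have hx' := blockPhase_succ_eq_of_lt hne hx hx_lt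
    have hz' := blockPhase_succ_eq hne hmarked.1 hz
      (by
        show substSeq H z (r + (n₁ + 1)) = substSeq H z (r + (n₂ + 1))
        rw [← hxz, ← hxz]
        exact substSeq_eq_of_blockPhase_eq hne hx')
    exact Prod.ext hx' hz'

lemma eventually_periodic_of_succ_eq {β : Type*} {f : ℕ → β}
    (hf : ∀ a b, f a = f b → f (a + 1) = f (b + 1)) {m p : ℕ} (h : f (m + p) = f m) {n : ℕ}
    (hn : m ≤ n) : f (n + p) = f n := by
  obtain ⟨j, rfl⟩ := Nat.exists_eq_add_of_le hn
  induction j with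
  | zero => exact h
  | succ j ih =>
    rw [show m + (j + 1) + p = m + j + p + 1 by omega]
    exact hf _ _ (ih (Nat.le_add_right m j))

lemma exists_eventually_periodic_substSeq_of_misaligned [Finite A] (hne : ∀ a, H a ≠ [])
    (hmarked : MarkedSubst H hne) (hr : 0 < r) (hrz : r < (H (z 0)).length)
    (hxz : ∀ t, substSeq H x t = substSeq H z (r + t)) :
    ∃ N p, 0 < p ∧ ∀ n, N ≤ n → substSeq H x (n + p) = substSeq H x n := by
  obtain ⟨C, hC⟩ := (Set.finite_range fun a => (H a).length).bddAbove
  have hphase : ∀ y n, blockPhase H y n ∈ (Set.univ : Set A) ×ˢ Set.Iio C := fun y n =>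
    ⟨trivial, (blockPhase_snd_lt hne y n).trans_le (hC ⟨_, rfl⟩)⟩
  have hfin := (Set.finite_univ (α := A)).prod (Set.finite_Iio C)
  let state n := (blockPhase H x n, blockPhase H z (r + n))
  obtain ⟨m, m', hlt, heq⟩ := Set.Finite.exists_lt_map_eq_of_forall_mem (f := state)
    (fun n => Set.mk_mem_prod (hphase x n) (hphase z (r + n))) (hfin.prod hfin)
  refine ⟨m, m' - m, Nat.sub_pos_of_lt hlt, fun n hn => ?_⟩
  have hper := eventually_periodic_of_succ_eq (f := state)
    (fun a b => misaligned_blockPhase_succ_eq hne hmarked hr hrz hxz)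
    (by rw [Nat.add_sub_cancel' hlt.le]; exact heq.symm) hn
  exact substSeq_eq_of_blockPhase_eq hne (Prod.ext_iff.mp hper).1

end Misaligned

def substPow (H : A → List A) (k : ℕ) (a : A) : List A := (wordMap H)^[k] [a]

lemma iterate_wordMap_append (k : ℕ) (w v : List A) :
    (wordMap H)^[k] (w ++ v) = (wordMap H)^[k] w ++ (wordMap H)^[k] v := by
  induction k generalizing w v with
  | zero => rfl
  | succ k ih => simp only [Function.iterate_succ_apply, wordMap_append, ih]

lemma wordMap_substPow (k : ℕ) (w : List A) : wordMap (substPow H k) w = (wordMap H)^[k] w := by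
  induction w with
  | nil =>
    induction k with
    | zero => rfl
    | succ k ih => rw [Function.iterate_succ_apply', ← ih]; rfl
  | cons a w ih =>
    rw [← List.singleton_append, iterate_wordMap_append, wordMap_append, ih]
    simp [substPow]

lemma substPow_add (m k : ℕ) (a : A) :
    substPow H (m + k) a = wordMap (substPow H m) (substPow H k a) := by
  rw [wordMap_substPow, substPow, substPow, Function.iterate_add_apply]

lemma substPow_ne_nil (hne : ∀ a, H a ≠ []) (k : ℕ) (a : A) : substPow H k a ≠ [] := by
  induction k generalizing a with
  | zero => simp [substPow]
  | succ k ih =>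
    obtain ⟨b, hb⟩ := List.exists_mem_of_ne_nil _ (ih a)
    obtain ⟨c, hc⟩ := List.exists_mem_of_ne_nil _ (hne b)
    rw [Nat.add_comm, substPow_add 1 k]
    exact List.ne_nil_of_mem (List.mem_flatMap.mpr ⟨b, hb, by simpa [substPow] using hc⟩)

variable {u : ℕ → A}

lemma wordMap_prefixWord_of_isFixedPointSubst (hne : ∀ a, H a ≠ [])
    (hu : IsFixedPointSubst H u) (m : ℕ) :
    wordMap H (prefixWord u m) = prefixWord u (blockStart H u m) := by
  refine List.ext_getElem (by simp [blockStart]) fun t h₁ h₂ => ?_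
  have := substSeq_eq_getD_of_lt_blockStart hne u h₁
  rw [hu, List.getD_eq_getElem _ _ h₁] at this
  rw [← this]
  simp [prefixWord]

lemma isFixedPointSubst_substPow (hne : ∀ a, H a ≠ []) (hu : IsFixedPointSubst H u) (k : ℕ) :
    IsFixedPointSubst (substPow H k) u := by
  have hpre : ∀ l m, ∃ m', m ≤ m' ∧ (wordMap H)^[l] (prefixWord u m) = prefixWord u m' := by
    intro l
    induction l with
    | zero => exact fun m => ⟨m, le_rfl, rfl⟩
    | succ l ih =>
      intro m
      obtain ⟨m', hm, hm'⟩ := ih m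
      refine ⟨blockStart H u m', hm.trans (strictMono_blockStart hne u).le_apply, ?_⟩
      rw [Function.iterate_succ_apply', hm', wordMap_prefixWord_of_isFixedPointSubst hne hu]
  funext n
  obtain ⟨m', hm, hm'⟩ := hpre k (n + 1)
  change (wordMap (substPow H k) (prefixWord u (n + 1))).getD n (u 0) = u n
  rw [wordMap_substPow, hm', List.getD_eq_getElem _ _ (by simp; omega)]
  simp [prefixWord]

lemma exists_le_length_substPow [Nontrivial A] (hprim : PrimitiveSubst H) (a : A) (n : ℕ) :
    ∃ m, n ≤ (substPow H m a).length := by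
  obtain ⟨k, -, hk⟩ := hprim
  have two_le : ∀ b, 2 ≤ (substPow H k b).length := by
    intro b
    obtain ⟨c, d, hcd⟩ := exists_pair_ne A
    have hc : c ∈ substPow H k b := hk b c
    have hd : d ∈ substPow H k b := hk b d
    match hw : substPow H k b with
    | [] => simp [hw] at hc
    | [e] => simp only [hw, List.mem_singleton] at hc hd; exact absurd (hc.trans hd.symm) hcd
    | _ :: _ :: _ => simp
  have growth : ∀ t, 2 ^ t ≤ (substPow H (k * t) a).length := by
    intro t
    induction t with
    | zero => simp [substPow]
    | succ t ih =>
      rw [show k * (t + 1) = k + k * t by ring, substPow_add, pow_succ']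
      exact (Nat.mul_le_mul_left 2 ih).trans (mul_length_le_length_wordMap two_le _)
  exact ⟨k * n, n.lt_two_pow_self.le.trans (growth n)⟩

lemma exists_prefixWord_isInfix_substPow [Nontrivial A] (hne : ∀ a, H a ≠ [])
    (hprim : PrimitiveSubst H) (hu : IsFixedPointSubst H u) (n : ℕ) :
    ∃ M, ∀ a, prefixWord u n <:+: substPow H M a := by
  obtain ⟨m, hm⟩ := exists_le_length_substPow hprim (u 0) n
  have hu_pre : substPow H m (u 0) = prefixWord u (blockStart (substPow H m) u 1) := by
    rw [← wordMap_prefixWord_of_isFixedPointSubst (substPow_ne_nil hne m)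
      (isFixedPointSubst_substPow hne hu m)]
    simp [prefixWord]
  have hlen := congrArg List.length hu_pre
  rw [length_prefixWord] at hlen
  obtain ⟨k, -, hk⟩ := hprim
  refine ⟨m + k, fun a => ?_⟩
  rw [substPow_add]
  refine (prefixWord_isPrefix u (hm.trans_eq hlen)).isInfix.trans ?_
  rw [← hu_pre]
  exact List.infix_flatMap_of_mem (hk a (u 0)) _

/-- Uniform recurrence: the prefix occurs in every block `H^M(a)` of `u = H^M(u)`. -/
lemma exists_bounded_gap_prefix_occurrence [Finite A] [Nontrivial A] (hne : ∀ a, H a ≠ [])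
    (hprim : PrimitiveSubst H) (hu : IsFixedPointSubst H u) (n : ℕ) :
    ∃ R, ∀ i, ∃ j, i ≤ j ∧ j ≤ i + R ∧ ∀ t < n, u (j + t) = u t := by
  obtain ⟨M, hM⟩ := exists_prefixWord_isInfix_substPow hne hprim hu n
  set G := substPow H M
  have hG : ∀ a, G a ≠ [] := substPow_ne_nil hne M
  have hGu : IsFixedPointSubst G u := isFixedPointSubst_substPow hne hu M
  obtain ⟨C, hC⟩ := (Set.finite_range fun a => (G a).length).bddAbove
  refine ⟨2 * C, fun i => ?_⟩
  set j := blockIndex G u i + 1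
  obtain ⟨s, e, hse⟩ := hM (u j)
  have hlen : s.length + n + e.length = (G (u j)).length := by simp [← hse]; omega
  have hi₁ := lt_blockStart_blockIndex_succ hG u i
  have hi₂ := blockStart_blockIndex_le (H := G) u i
  rw [blockStart_succ] at hi₁
  have hCj : (G (u j)).length ≤ C := hC ⟨_, rfl⟩
  have hCi : (G (u (blockIndex G u i))).length ≤ C := hC ⟨_, rfl⟩
  refine ⟨blockStart G u j + s.length, ?_, ?_, fun t ht => ?_⟩
  · rw [blockStart_succ]; omega
  · rw [blockStart_succ]; omega
  · have hblock := substSeq_blockStart_add hG u (m := j) (t := s.length + t) (by omega)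
    rw [hGu] at hblock
    rw [Nat.add_assoc, hblock, ← hse, List.getD_append _ _ _ _ (by simp; omega),
      List.getD_append_right _ _ _ _ (by omega)]
    simp [prefixWord, ht]

lemma exists_shift_eqOn_of_mem_orbitClosure [TopologicalSpace A] [DiscreteTopology A]
    {y : ℕ → A} (hy : y ∈ orbitClosure u) (L : ℕ) : ∃ i, ∀ t < L, y t = u (t + i) := by
  obtain ⟨_, hv, i, rfl⟩ := mem_closure_iff.mp hy _ (PiNat.isOpen_cylinder (fun _ => A) y L)
    (PiNat.self_mem_cylinder y L)
  exact ⟨i, fun t ht => (hv t ht).symm.trans (shift_iterate_apply i u t)⟩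

/-- Every prefix of `u` occurs inside the periodic tail of `y`. -/
lemma periodicSeq_of_eventually_periodic_mem_orbitClosure [TopologicalSpace A]
    [DiscreteTopology A] [Finite A] [Nontrivial A] (hne : ∀ a, H a ≠ [])
    (hprim : PrimitiveSubst H) (hu : IsFixedPointSubst H u) {y : ℕ → A}
    (hy : y ∈ orbitClosure u) {N p : ℕ} (hp : 0 < p) (hper : ∀ n, N ≤ n → y (n + p) = y n) :
    PeriodicSeq u := by
  refine ⟨p, hp, fun t₀ => ?_⟩
  obtain ⟨R, hR⟩ := exists_bounded_gap_prefix_occurrence hne hprim hu (t₀ + p + 1)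
  obtain ⟨i, hi⟩ := exists_shift_eqOn_of_mem_orbitClosure hy (N + R + t₀ + p + 1)
  obtain ⟨j, hij, hjR, hj⟩ := hR (i + N)
  have hu_y : ∀ t ≤ t₀ + p, u t = y (j - i + t) := fun t ht => by
    rw [← hj t (by omega), hi _ (by omega)]
    congr 1
    omega
  rw [hu_y _ le_rfl, hu_y _ (by omega), ← Nat.add_assoc]
  exact hper _ (by omega)

/-- Every point of the attractor desubstitutes: the sets `σ^r(H(K ∩ {r < |H(z₀)|}))` are
compact, and together they contain the orbit of `u = H(u)`. -/
lemma exists_shift_substSeq_eq_of_mem_orbitClosure [TopologicalSpace A] [DiscreteTopology A]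
    [Finite A] (hne : ∀ a, H a ≠ []) (hu : IsFixedPointSubst H u) {y : ℕ → A}
    (hy : y ∈ orbitClosure u) :
    ∃ z ∈ orbitClosure u, ∃ r < (H (z 0)).length, shift^[r] (substSeq H z) = y := by
  obtain ⟨C, hC⟩ := (Set.finite_range fun a => (H a).length).bddAbove
  let F r := (fun z => shift^[r] (substSeq H z)) ''
    (orbitClosure u ∩ (fun z => z 0) ⁻¹' {a | r < (H a).length})
  suffices hK : orbitClosure u ⊆ ⋃ r ∈ Finset.range C, F r by
    obtain ⟨r, -, z, ⟨hz, hr⟩, rfl⟩ := by simpa using hK hy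
    exact ⟨z, hz, r, hr, rfl⟩
  refine closure_minimal ?_ (isClosed_biUnion_finset fun r _ => ?_)
  · rintro _ ⟨i, rfl⟩
    set j := blockIndex H u i
    have hi₁ : blockStart H u j ≤ i := blockStart_blockIndex_le u i
    have hi₂ : i < blockStart H u (j + 1) := lt_blockStart_blockIndex_succ hne u i
    rw [blockStart_succ] at hi₂
    have hCj : (H (u j)).length ≤ C := hC ⟨u j, rfl⟩
    refine Set.mem_iUnion₂.mpr ⟨i - blockStart H u j, Finset.mem_range.mpr (by omega),
      shift^[j] u, ⟨subset_closure ⟨j, rfl⟩, ?_⟩, ?_⟩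
    · simpa [Set.mem_preimage, shift_iterate_apply] using (by omega : i - _ < _)
    · dsimp only
      rw [← shift_iterate_blockStart_substSeq hne, ← Function.iterate_add_apply, hu,
        Nat.sub_add_cancel hi₁]
  · exact ((isClosed_closure.isCompact.inter_right
      ((isClosed_discrete _).preimage (continuous_apply 0))).image
      ((continuous_shift.iterate r).comp continuous_substSeq)).isClosed

lemma mem_orbitClosure_of_substSeq_mem [TopologicalSpace A] [DiscreteTopology A] [Finite A]
    [Nontrivial A] (hne : ∀ a, H a ≠ []) (hprim : PrimitiveSubst H)
    (haper : AperiodicSubst H) (hmarked : MarkedSubst H hne) (hu : IsFixedPointSubst H u)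
    {x : ℕ → A} (hx : substSeq H x ∈ orbitClosure u) : x ∈ orbitClosure u := by
  obtain ⟨z, hz, r, hrz, hzx⟩ := exists_shift_substSeq_eq_of_mem_orbitClosure hne hu hx
  rcases Nat.eq_zero_or_pos r with rfl | hr
  · rwa [← substSeq_injective hne hmarked.1 hzx]
  · have hxz : ∀ t, substSeq H x t = substSeq H z (r + t) := fun t => by
      rw [← hzx, shift_iterate_apply, Nat.add_comm]
    obtain ⟨N, p, hp, hper⟩ :=
      exists_eventually_periodic_substSeq_of_misaligned hne hmarked hr hrz hxz
    exact absurd (periodicSeq_of_eventually_periodic_mem_orbitClosure hne hprim hu hx hp hper)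
      (haper u hu)

theorem iterate_not_mem_attractor_general
    {A : Type*} [Fintype A] [TopologicalSpace A] [DiscreteTopology A]
    (hD : 2 ≤ Fintype.card A)
    (H : A → List A) (hne : ∀ a, H a ≠ [])
    (hprim : PrimitiveSubst H) (haper : AperiodicSubst H)
    (hmarked : MarkedSubst H hne)
    (u : ℕ → A) (hu : IsFixedPointSubst H u)
    (x : ℕ → A) (hx : x ∉ orbitClosure u) (s : ℕ) :
    (substSeq H)^[s] x ∉ orbitClosure u := by
  have : Nontrivial A := Fintype.one_lt_card_iff_nontrivial.mp hD
  induction s with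
  | zero => exact hx
  | succ s ih =>
    rw [Function.iterate_succ_apply']
    exact fun h => ih (mem_orbitClosure_of_substSeq_mem hne hprim haper hmarked hu h)

/-- For a marked, primitive, aperiodic substitution, the complement
of the attractor `K` is invariant under `H`: if `x ∉ K` then `H^s(x) ∉ K` for all `s`. -/
theorem iterate_not_mem_attractor
    {A : Type*} [Fintype A] [DecidableEq A] [TopologicalSpace A] [DiscreteTopology A]
    (hD : 2 ≤ Fintype.card A)
    (H : A → List A) (hne : ∀ a, H a ≠ [])
    (hprim : PrimitiveSubst H) (haper : AperiodicSubst H)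
    (hmarked : MarkedSubst H hne)
    (u : ℕ → A) (hu : IsFixedPointSubst H u)
    (x : ℕ → A) (hx : x ∉ orbitClosure u) (s : ℕ) :
    (substSeq H)^[s] x ∉ orbitClosure u :=
  iterate_not_mem_attractor_general hD H hne hprim haper hmarked u hu x hx s
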